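/- Suppose f : R^n → R is C^2 with L-Lipschitz Hessian. Let d^1,…,d^p be linearly independent nonzero vectors in R^n, S = [d^1 ⋯ d^p], and define the diagonal-style generalized simplex Hessian H := (Sᵀ)† Diag(c) Sᵀ where c_i := (f(x^0+d^i) + f(x^0−d^i) − 2f(x^0)) / ||d^i||². Then for each i, |(d^i/||d^i||)ᵀ (H − ∇²f(x^0)) (d^i/||d^i||)| ≤ (L/3) Δ_S, where Δ_S = max_j ||d^j||. -/

import Mathlib

/-!
Along the line `t ↦ x + t • v`, the function
`F t = f (x + t • v) + f (x - t • v) - 2 f x - t² ⟪v, ∇²f(x) v⟫` satisfies `F 0 = F' 0 = 0` and,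
by the Lipschitz bound on the Hessian, `|F'' t| ≤ 2 L t ‖v‖³`; integrating twice gives
`|F 1| ≤ L ‖v‖³ / 3`.

Because the columns of `S` are independent, `Sᵀ Sp Sᵀ = Sᵀ` forces `Spᵀ S = 1`, i.e. `Spᵀ dⁱ = eⁱ`.
Hence `(dⁱ)ᵀ H dⁱ = cᵢ ‖dⁱ‖²` is exactly the second difference of `f` at `x0` along `dⁱ`, and
dividing by `‖dⁱ‖²` turns the bound on `F 1` into `L ‖dⁱ‖ / 3 ≤ L Δ_S / 3`.
-/

open Matrix
open scoped RealInnerProductSpace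

noncomputable section

abbrev Eu (n : ℕ) := EuclideanSpace ℝ (Fin n)

def IsMP {a b : ℕ} (A : Matrix (Fin a) (Fin b) ℝ) (A' : Matrix (Fin b) (Fin a) ℝ) : Prop :=
  A * A' * A = A ∧ A' * A * A' = A' ∧ (A * A')ᵀ = A * A' ∧ (A' * A)ᵀ = A' * A

def euclNorm {k : ℕ} (v : Fin k → ℝ) : ℝ := Real.sqrt (∑ i, v i ^ 2)

def spNorm {a b : ℕ} (A : Matrix (Fin a) (Fin b) ℝ) : ℝ :=
  ⨆ v : {v : Fin b → ℝ // euclNorm v ≤ 1}, euclNorm (A.mulVec v.1)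

def frobNorm {a b : ℕ} (A : Matrix (Fin a) (Fin b) ℝ) : ℝ :=
  Real.sqrt (∑ i, ∑ j, A i j ^ 2)

def mat1Norm {a b : ℕ} (A : Matrix (Fin a) (Fin b) ℝ) : ℝ := ⨆ j, ∑ i, |A i j|

open Set in
theorem abs_le_of_abs_deriv_le_pow {F F' : ℝ → ℝ} {K b : ℝ} (k : ℕ)
    (hF : ∀ t ∈ Icc 0 b, HasDerivAt F (F' t) t) (hF0 : F 0 = 0)
    (hF' : ∀ t ∈ Ico 0 b, |F' t| ≤ K * t ^ k) :
    ∀ t ∈ Icc 0 b, |F t| ≤ K / (k + 1) * t ^ (k + 1) := by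
  have hB : ∀ t, HasDerivAt (fun s => K / (k + 1) * s ^ (k + 1)) (K * t ^ k) t := fun t =>
    ((hasDerivAt_pow (k + 1) t).const_mul (K / (k + 1))).congr_deriv (by
      rw [Nat.add_sub_cancel]
      push_cast
      field_simp)
  exact image_norm_le_of_norm_deriv_right_le_deriv_boundary
    (fun t ht => (hF t ht).continuousAt.continuousWithinAt)
    (fun t ht => (hF t (Ico_subset_Icc_self ht)).hasDerivWithinAt) (by simp [hF0]) hB hF'

section SecondDifference

variable {E : Type*} [NormedAddCommGroup E] [InnerProductSpace ℝ E]
  {f : E → ℝ} {g : E → E} {H : E → E →L[ℝ] E}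

theorem hasDerivAt_add_smul (x w : E) (t : ℝ) : HasDerivAt (fun s : ℝ => x + s • w) w t := by
  simpa using ((hasDerivAt_id t).smul_const w).const_add x

theorem hasDerivAt_inner_comp_add_smul (hg : ∀ x, HasFDerivAt g (H x) x) (x w : E) (t : ℝ) :
    HasDerivAt (fun s => ⟪g (x + s • w), w⟫) ⟪w, H (x + t • w) w⟫ t := by
  simpa [real_inner_comm] using
    ((hg (x + t • w)).comp_hasDerivAt t (hasDerivAt_add_smul x w t)).inner ℝ
      (hasDerivAt_const t w)

theorem abs_inner_apply_add_smul_sub_le {L : ℝ} (hH : ∀ x y, ‖H x - H y‖ ≤ L * ‖x - y‖)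
    (x w : E) {t : ℝ} (ht : 0 ≤ t) :
    |⟪w, H (x + t • w) w⟫ - ⟪w, H x w⟫| ≤ L * t * ‖w‖ ^ 3 := by
  rw [← inner_sub_right, ← _root_.sub_apply]
  calc |⟪w, (H (x + t • w) - H x) w⟫|
      ≤ ‖w‖ * (‖H (x + t • w) - H x‖ * ‖w‖) :=
        (abs_real_inner_le_norm _ _).trans
          (mul_le_mul_of_nonneg_left (ContinuousLinearMap.le_opNorm _ _) (norm_nonneg _))
    _ ≤ ‖w‖ * (L * ‖t • w‖ * ‖w‖) := by
        gcongr
        simpa using hH (x + t • w) x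
    _ = L * t * ‖w‖ ^ 3 := by
        rw [norm_smul, Real.norm_of_nonneg ht]
        ring

variable [CompleteSpace E]

theorem hasDerivAt_comp_add_smul (hf : ∀ x, HasGradientAt f (g x) x) (x w : E) (t : ℝ) :
    HasDerivAt (fun s => f (x + s • w)) ⟪g (x + t • w), w⟫ t := by
  simpa [InnerProductSpace.toDual_apply_apply, Function.comp_def, real_inner_comm] using
    (hf (x + t • w)).hasFDerivAt.comp_hasDerivAt t (hasDerivAt_add_smul x w t)

theorem abs_second_difference_sub_inner_le (hf : ∀ x, HasGradientAt f (g x) x)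
    (hg : ∀ x, HasFDerivAt g (H x) x) {L : ℝ} (hH : ∀ x y, ‖H x - H y‖ ≤ L * ‖x - y‖)
    (x v : E) :
    |f (x + v) + f (x - v) - 2 * f x - ⟪v, H x v⟫| ≤ L / 3 * ‖v‖ ^ 3 := by
  set Q := ⟪v, H x v⟫
  have hF : ∀ t, HasDerivAt (fun s => f (x + s • v) + f (x + s • -v) - 2 * f x - Q * s ^ 2)
      (⟪g (x + t • v), v⟫ + ⟪g (x + t • -v), -v⟫ - 2 * Q * t) t := fun t => by
    refine ((((hasDerivAt_comp_add_smul hf x v t).add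
      (hasDerivAt_comp_add_smul hf x (-v) t)).sub_const (2 * f x)).sub
      ((hasDerivAt_pow 2 t).const_mul Q)).congr_deriv ?_
    push_cast
    ring
  have hG : ∀ t, HasDerivAt (fun s => ⟪g (x + s • v), v⟫ + ⟪g (x + s • -v), -v⟫ - 2 * Q * s)
      (⟪v, H (x + t • v) v⟫ + ⟪-v, H (x + t • -v) (-v)⟫ - 2 * Q) t := fun t => by
    refine (((hasDerivAt_inner_comp_add_smul hg x v t).add
      (hasDerivAt_inner_comp_add_smul hg x (-v) t)).sub
      ((hasDerivAt_id t).const_mul (2 * Q))).congr_deriv ?_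
    ring
  have hG' : ∀ t ∈ Set.Ico (0 : ℝ) 1,
      |⟪v, H (x + t • v) v⟫ + ⟪-v, H (x + t • -v) (-v)⟫ - 2 * Q| ≤ 2 * (L * ‖v‖ ^ 3) * t ^ 1 := by
    intro t ht
    have hplus := abs_inner_apply_add_smul_sub_le hH x v ht.1
    have hminus := abs_inner_apply_add_smul_sub_le hH x (-v) ht.1
    simp only [map_neg, inner_neg_neg, norm_neg] at hminus
    calc _ = |(⟪v, H (x + t • v) v⟫ - Q) + (⟪v, H (x + t • -v) v⟫ - Q)| := by
          rw [map_neg, inner_neg_neg]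
          congr 1
          ring
      _ ≤ 2 * (L * ‖v‖ ^ 3) * t ^ 1 := (abs_add_le _ _).trans (by linarith)
  have hGbound := abs_le_of_abs_deriv_le_pow 1 (fun t _ => hG t) (by simp) hG'
  have hFbound := abs_le_of_abs_deriv_le_pow (K := L * ‖v‖ ^ 3) 2 (fun t _ => hF t)
    (by simp only [zero_smul, add_zero]; ring)
    (fun t ht => (hGbound t (Set.Ico_subset_Icc_self ht)).trans_eq (by push_cast; ring))
    1 (by simp)
  simp only [one_smul, ← sub_eq_add_neg, one_pow, mul_one] at hFbound
  exact hFbound.trans_eq (by ring)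

end SecondDifference

namespace Matrix

variable {m n R : Type*} [Fintype m] [Fintype n] [DecidableEq n] [CommSemiring R]

theorem mul_eq_one_of_mul_mul_eq_self {S : Matrix m n R} {X : Matrix n m R}
    (hS : Function.Injective S.mulVec) (h : S * X * S = S) : X * S = 1 :=
  ext_iff_mulVec.2 fun v => hS <| by rw [mulVec_mulVec, ← Matrix.mul_assoc S X S, h, one_mulVec]

theorem col_dotProduct_mulVec_col {S X : Matrix m n R} (h : Xᵀ * S = 1) (c : n → R) (i : n) :
    S.col i ⬝ᵥ (X * diagonal c * Sᵀ) *ᵥ S.col i = c i * (S.col i ⬝ᵥ S.col i) := by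
  have hX : S.col i ᵥ* X = Pi.single i 1 := by
    rw [← mulVec_transpose, ← mulVec_single_one, mulVec_mulVec, h, one_mulVec]
  rw [Matrix.mul_assoc X, ← mulVec_mulVec, dotProduct_mulVec, hX, ← mulVec_mulVec,
    single_dotProduct, one_mul, mulVec_diagonal]
  rfl

end Matrix

theorem euclNorm_eq_norm_toLp {k : ℕ} (v : Fin k → ℝ) : euclNorm v = ‖WithLp.toLp 2 v‖ := by
  simp [euclNorm, EuclideanSpace.norm_eq]

theorem norm_toEuclideanCLM_le_spNorm {k : ℕ} (A : Matrix (Fin k) (Fin k) ℝ) :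
    ‖toEuclideanCLM (𝕜 := ℝ) A‖ ≤ spNorm A := by
  have hbdd : BddAbove (Set.range fun v : {v : Fin k → ℝ // euclNorm v ≤ 1} =>
      euclNorm (A *ᵥ v.1)) := by
    refine ⟨‖toEuclideanCLM (𝕜 := ℝ) A‖, Set.forall_mem_range.2 fun ⟨v, hv⟩ => ?_⟩
    rw [euclNorm_eq_norm_toLp] at hv ⊢
    simpa using (toEuclideanCLM (𝕜 := ℝ) A).le_of_opNorm_le le_rfl (WithLp.toLp 2 v)
      |>.trans (mul_le_of_le_one_right (norm_nonneg _) hv)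
  refine ContinuousLinearMap.opNorm_le_of_unit_norm
    (Real.iSup_nonneg fun _ => Real.sqrt_nonneg _) fun x hx => ?_
  have hx' : euclNorm (WithLp.ofLp x) ≤ 1 := by simp [euclNorm_eq_norm_toLp, hx]
  calc ‖toEuclideanCLM (𝕜 := ℝ) A x‖ = euclNorm (A *ᵥ WithLp.ofLp x) := by
        rw [euclNorm_eq_norm_toLp]; rfl
    _ ≤ spNorm A := le_ciSup hbdd ⟨WithLp.ofLp x, hx'⟩

theorem abs_second_difference_sub_dotProduct_le {n : ℕ} {f : Eu n → ℝ} {g : Eu n → Eu n}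
    {Hf : Eu n → Matrix (Fin n) (Fin n) ℝ} {L : ℝ} (hgrad : ∀ x, HasGradientAt f (g x) x)
    (hhess : ∀ x, HasFDerivAt g (toEuclideanCLM (𝕜 := ℝ) (Hf x)) x)
    (hlip : ∀ x y, spNorm (Hf x - Hf y) ≤ L * ‖x - y‖) (x v : Eu n) :
    |f (x + v) + f (x - v) - 2 * f x - v ⬝ᵥ Hf x *ᵥ v| ≤ L / 3 * ‖v‖ ^ 3 := by
  have hlip' : ∀ x y,
      ‖toEuclideanCLM (𝕜 := ℝ) (Hf x) - toEuclideanCLM (𝕜 := ℝ) (Hf y)‖ ≤ L * ‖x - y‖ :=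
    fun x y => by
      rw [← map_sub]
      exact (norm_toEuclideanCLM_le_spNorm _).trans (hlip x y)
  simpa only [inner_toEuclideanCLM] using abs_second_difference_sub_inner_le hgrad hhess hlip' x v

theorem dotProduct_mulVec_self_of_mul_mul_eq_self {n p : ℕ} {d : Fin p → Eu n}
    (hli : LinearIndependent ℝ d) {S Sp : Matrix (Fin n) (Fin p) ℝ} (hS : ∀ k i, S k i = d i k)
    (hSp : Sᵀ * Sp * Sᵀ = Sᵀ) (c : Fin p → ℝ) (i : Fin p) :
    d i ⬝ᵥ (Sp * diagonal c * Sᵀ) *ᵥ d i = c i * ‖d i‖ ^ 2 := by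
  have hcols : S.col = fun j => WithLp.ofLp (d j) := funext fun j => funext fun k => hS k j
  have hinj : Function.Injective S.mulVec := by
    rw [mulVec_injective_iff, hcols]
    exact hli.map' (WithLp.linearEquiv 2 ℝ (Fin n → ℝ)).toLinearMap (LinearEquiv.ker _)
  have hSpS : Spᵀ * S = 1 :=
    mul_eq_one_of_mul_mul_eq_self hinj (by simpa [Matrix.mul_assoc] using congrArg transpose hSp)
  have := col_dotProduct_mulVec_col hSpS c i
  rw [hcols] at this
  rw [this, ← real_inner_self_eq_norm_sq, EuclideanSpace.inner_eq_star_dotProduct]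
  rfl

theorem stmt_11_general {n p : ℕ} (f : Eu n → ℝ) (g : Eu n → Eu n)
    (Hf : Eu n → Matrix (Fin n) (Fin n) ℝ) (L : ℝ) (hL : 0 ≤ L)
    (hgrad : ∀ x, HasGradientAt f (g x) x)
    (hhess : ∀ x, HasFDerivAt g (Matrix.toEuclideanCLM (𝕜 := ℝ) (Hf x)) x)
    (hlip : ∀ x y, spNorm (Hf x - Hf y) ≤ L * ‖x - y‖)
    (x0 : Eu n) (d : Fin p → Eu n)
    (hli : LinearIndependent ℝ d)
    (S : Matrix (Fin n) (Fin p) ℝ) (hS : ∀ k i, S k i = d i k)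
    (Sp : Matrix (Fin n) (Fin p) ℝ) (hSp : IsMP Sᵀ Sp)
    (c : Fin p → ℝ)
    (hc : ∀ i, c i = (f (x0 + d i) + f (x0 - d i) - 2 * f x0) / ‖d i‖ ^ 2)
    (H : Matrix (Fin n) (Fin n) ℝ) (hH : H = Sp * Matrix.diagonal c * Sᵀ)
    (i : Fin p) :
    |(‖d i‖⁻¹ • d i) ⬝ᵥ (H - Hf x0).mulVec (‖d i‖⁻¹ • d i)|
      ≤ L / 3 * ⨆ j, ‖d j‖ := by
  have hdi : ‖d i‖ ≠ 0 := norm_ne_zero_iff.2 (hli.ne_zero i)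
  have hquad : d i ⬝ᵥ H *ᵥ d i = c i * ‖d i‖ ^ 2 :=
    hH ▸ dotProduct_mulVec_self_of_mul_mul_eq_self hli hS hSp.1 c i
  calc |(‖d i‖⁻¹ • d i) ⬝ᵥ (H - Hf x0) *ᵥ (‖d i‖⁻¹ • d i)|
      = |f (x0 + d i) + f (x0 - d i) - 2 * f x0 - d i ⬝ᵥ Hf x0 *ᵥ d i| / ‖d i‖ ^ 2 := by
        simp only [WithLp.ofLp_smul, smul_dotProduct, mulVec_smul, dotProduct_smul, sub_mulVec,
          dotProduct_sub, hquad, hc, smul_eq_mul]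
        rw [div_mul_cancel₀ _ (pow_ne_zero 2 hdi), ← mul_sub, ← mul_assoc, abs_mul,
          abs_of_nonneg (by positivity), div_eq_inv_mul, sq, mul_inv]
    _ ≤ L / 3 * ‖d i‖ ^ 3 / ‖d i‖ ^ 2 := by
        gcongr
        exact abs_second_difference_sub_dotProduct_le hgrad hhess hlip x0 (d i)
    _ = L / 3 * ‖d i‖ := by field_simp
    _ ≤ L / 3 * ⨆ j, ‖d j‖ := by
        gcongr
        exact le_ciSup (f := fun j => ‖d j‖) (Set.finite_range _).bddAbove i

theorem stmt_11 {n p : ℕ} (f : Eu n → ℝ) (g : Eu n → Eu n)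
    (Hf : Eu n → Matrix (Fin n) (Fin n) ℝ) (L : ℝ) (hL : 0 ≤ L)
    (hgrad : ∀ x, HasGradientAt f (g x) x)
    (hhess : ∀ x, HasFDerivAt g (Matrix.toEuclideanCLM (𝕜 := ℝ) (Hf x)) x)
    (hlip : ∀ x y, spNorm (Hf x - Hf y) ≤ L * ‖x - y‖)
    (x0 : Eu n) (d : Fin p → Eu n) (hd : ∀ i, d i ≠ 0)
    (hli : LinearIndependent ℝ d)
    (S : Matrix (Fin n) (Fin p) ℝ) (hS : ∀ k i, S k i = d i k)
    (Sp : Matrix (Fin n) (Fin p) ℝ) (hSp : IsMP Sᵀ Sp)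
    (c : Fin p → ℝ)
    (hc : ∀ i, c i = (f (x0 + d i) + f (x0 - d i) - 2 * f x0) / ‖d i‖ ^ 2)
    (H : Matrix (Fin n) (Fin n) ℝ) (hH : H = Sp * Matrix.diagonal c * Sᵀ)
    (i : Fin p) :
    |(‖d i‖⁻¹ • d i) ⬝ᵥ (H - Hf x0).mulVec (‖d i‖⁻¹ • d i)|
      ≤ L / 3 * ⨆ j, ‖d j‖ :=
  stmt_11_general f g Hf L hL hgrad hhess hlip x0 d hli S hS Sp hSp c hc H hH i
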